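/- arXiv:2506.00429 — 2 statements merged into one kernel-verified Lean document; each statement's English description precedes it below -/
import Mathlib

section
/- Let p be an odd prime, G a finite abelian p-group of order n with exponent p^{t_m}, and let k be an integer with 2 ≤ k < n and p^{t_m} | k. Then for any x ∈ G, the incidence structure (G, B_k^x) is a 1-design. -/
open Finset

/-- The family of `k`-element subsets of `G` whose elements sum to `x`. -/
def sumBlocks (G : Type) [AddCommGroup G] [Fintype G] [DecidableEq G]
    (k : ℕ) (x : G) : Finset (Finset G) :=
  Finset.univ.filter (fun T => T.card = k ∧ T.sum id = x)

/-- The family of `k`-element subsets of `G \ {0}` whose elements sum to `x`. -/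
def sumBlocksStar (G : Type) [AddCommGroup G] [Fintype G] [DecidableEq G]
    (k : ℕ) (x : G) : Finset (Finset G) :=
  Finset.univ.filter (fun T => T.card = k ∧ T.sum id = x ∧ (0 : G) ∉ T)

/-- `(G, B_k^x)` is a 1-design: the block family is nonempty and every
point of `G` lies in the same number of blocks. -/
def isOneDesign (G : Type) [AddCommGroup G] [Fintype G] [DecidableEq G]
    (k : ℕ) (x : G) : Prop :=
  sumBlocks G k x ≠ ∅ ∧ ∃ r : ℕ, ∀ y : G,
    ((sumBlocks G k x).filter (fun B => y ∈ B)).card = r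

/-- `e(x) = max {d : d ∣ exp(G), x ∈ dG}`. -/
noncomputable def eMax (G : Type) [AddCommGroup G] [Fintype G] [DecidableEq G] (x : G) : ℕ :=
  Nat.findGreatest (fun d => d ∣ AddMonoid.exponent G ∧ ∃ y : G, d • y = x)
    (AddMonoid.exponent G)

/-!
Since the exponent of `G` divides `k`, translating a `k`-subset by `z` adds `k • z = 0` to its
sum, so translations permute `B_k^x`, and translation by `y` carries the blocks through `0` onto
the blocks through `y`. Nonemptiness needs only that `G` has no element of order two: small
blocks are built by induction on the size, trading a `0` in a block for a pair `{c, -c}` disjoint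
from the block and its negative, and large blocks are complements of small ones because the
elements of `G` sum to `0`.
-/

open scoped Pointwise

section OneDesign

variable {G : Type} [AddCommGroup G]

lemma eq_zero_of_add_self_eq_zero_of_odd_exponent (hodd : Odd (AddMonoid.exponent G))
    {c : G} (hc : c + c = 0) : c = 0 := by
  have h2 : addOrderOf c ∣ 2 := addOrderOf_dvd_of_nsmul_eq_zero (by rwa [two_nsmul])
  have hcop : (addOrderOf c).Coprime (AddMonoid.exponent G) :=
    (Nat.coprime_two_left.mpr hodd).coprime_dvd_left h2
  exact AddMonoid.addOrderOf_eq_one_iff.mp (hcop.eq_one_of_dvd (AddMonoid.addOrder_dvd_exponent c))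

variable [Fintype G]

lemma sum_univ_eq_zero_of_add_self (hG : ∀ c : G, c + c = 0 → c = 0) : ∑ a : G, a = 0 := by
  have hneg : ∑ a : G, a = -∑ a : G, a := by
    rw [← Finset.sum_neg_distrib]
    exact (Fintype.sum_equiv (Equiv.neg G) _ _ fun _ => rfl).symm
  exact hG _ (by nth_rewrite 2 [hneg]; exact add_neg_cancel _)

variable [DecidableEq G]

lemma mem_sumBlocks {k : ℕ} {x : G} {T : Finset G} :
    T ∈ sumBlocks G k x ↔ #T = k ∧ T.sum id = x := by
  simp [sumBlocks]

lemma exists_card_sum_eq_of_two_mul_lt (hG : ∀ c : G, c + c = 0 → c = 0) {j : ℕ}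
    (hj : 2 * j < Fintype.card G) (x : G) : ∃ T : Finset G, #T = j + 1 ∧ T.sum id = x := by
  induction j with
  | zero => exact ⟨{x}, card_singleton x, sum_singleton id x⟩
  | succ j ih =>
    obtain ⟨T, hcard, hsum⟩ := ih (by omega)
    by_cases h0 : (0 : G) ∈ T
    · have hlt : #(T ∪ -T) < #(univ : Finset G) := by
        have := card_union_le T (-T)
        rw [card_neg, card_univ] at *
        omega
      obtain ⟨c, -, hc⟩ := exists_mem_notMem_of_card_lt_card hlt
      simp only [mem_union, mem_neg', not_or] at hc
      obtain ⟨hcT, hncT⟩ := hc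
      have hcne : c ≠ -c := fun h =>
        hcT (hG c (by nth_rewrite 2 [h]; exact add_neg_cancel c) ▸ h0)
      have hnc : -c ∉ T.erase 0 := fun h => hncT (mem_of_mem_erase h)
      have hc : c ∉ insert (-c) (T.erase 0) := by
        rw [mem_insert, not_or]
        exact ⟨hcne, fun h => hcT (mem_of_mem_erase h)⟩
      refine ⟨insert c (insert (-c) (T.erase 0)), ?_, ?_⟩
      · rw [card_insert_of_notMem hc, card_insert_of_notMem hnc, card_erase_of_mem h0, hcard]
        omega
      · rw [sum_insert hc, sum_insert hnc, sum_erase T (show id (0 : G) = 0 from rfl), hsum,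
          id, id, add_neg_cancel_left]
    · exact ⟨insert 0 T, by rw [card_insert_of_notMem h0, hcard],
        by rw [sum_insert h0, hsum, id, zero_add]⟩

lemma sumBlocks_nonempty (hG : ∀ c : G, c + c = 0 → c = 0) {k : ℕ} (hk : 1 ≤ k)
    (hkn : k < Fintype.card G) (x : G) : (sumBlocks G k x).Nonempty := by
  by_cases hsmall : 2 * (k - 1) < Fintype.card G
  · obtain ⟨T, hcard, hsum⟩ := exists_card_sum_eq_of_two_mul_lt hG hsmall x
    exact ⟨T, mem_sumBlocks.mpr ⟨by omega, hsum⟩⟩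
  · obtain ⟨T, hcard, hsum⟩ :=
      exists_card_sum_eq_of_two_mul_lt hG (j := Fintype.card G - k - 1) (by omega) (-x)
    refine ⟨Tᶜ, mem_sumBlocks.mpr ⟨by rw [card_compl, hcard]; omega, ?_⟩⟩
    have htotal : Tᶜ.sum id + T.sum id = 0 :=
      (sum_compl_add_sum T id).trans (sum_univ_eq_zero_of_add_self hG)
    rw [hsum] at htotal
    exact add_neg_eq_zero.mp htotal

lemma map_addRightEmbedding_mem_sumBlocks {k : ℕ} (hk : ∀ z : G, k • z = 0) {x : G}
    {B : Finset G} (hB : B ∈ sumBlocks G k x) (z : G) :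
    B.map (addRightEmbedding z) ∈ sumBlocks G k x := by
  obtain ⟨hcard, hsum⟩ := mem_sumBlocks.mp hB
  refine mem_sumBlocks.mpr ⟨by rw [card_map, hcard], ?_⟩
  rw [sum_map]
  simp only [addRightEmbedding_apply, id, sum_add_distrib, sum_const, hcard, hk, add_zero]
  exact hsum

lemma card_filter_mem_sumBlocks {k : ℕ} (hk : ∀ z : G, k • z = 0) (x y : G) :
    #((sumBlocks G k x).filter (y ∈ ·)) = #((sumBlocks G k x).filter (0 ∈ ·)) := by
  refine card_nbij' (·.map (addRightEmbedding (-y))) (·.map (addRightEmbedding y))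
    ?_ ?_ ?_ ?_ <;> intro B hB
  · simp only [coe_filter, Set.mem_ofPred_eq, mem_map, addRightEmbedding_apply] at hB ⊢
    exact ⟨map_addRightEmbedding_mem_sumBlocks hk hB.1 _, y, hB.2, add_neg_cancel y⟩
  · simp only [coe_filter, Set.mem_ofPred_eq, mem_map, addRightEmbedding_apply] at hB ⊢
    exact ⟨map_addRightEmbedding_mem_sumBlocks hk hB.1 _, 0, hB.2, zero_add y⟩
  · ext; simp
  · ext; simp

end OneDesign

theorem stmt3_general (p tm : ℕ) (hodd : Odd p)
    (G : Type) [AddCommGroup G] [Fintype G] [DecidableEq G]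
    (hexp : AddMonoid.exponent G = p ^ tm)
    (k : ℕ) (hk2 : 2 ≤ k) (hkn : k < Fintype.card G)
    (hdvd : p ^ tm ∣ k) (x : G) :
    isOneDesign G k x := by
  have hk : ∀ z : G, k • z = 0 :=
    AddMonoid.exponent_dvd_iff_forall_nsmul_eq_zero.mp (hexp ▸ hdvd)
  have hG : ∀ c : G, c + c = 0 → c = 0 := fun _ =>
    eq_zero_of_add_self_eq_zero_of_odd_exponent (hexp ▸ hodd.pow)
  exact ⟨(sumBlocks_nonempty hG (by omega) hkn x).ne_empty, _, card_filter_mem_sumBlocks hk x⟩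

theorem stmt3 (p tm : ℕ) (hp : p.Prime) (hodd : Odd p)
    (G : Type) [AddCommGroup G] [Fintype G] [DecidableEq G]
    (hexp : AddMonoid.exponent G = p ^ tm)
    (k : ℕ) (hk2 : 2 ≤ k) (hkn : k < Fintype.card G)
    (hdvd : p ^ tm ∣ k) (x : G) :
    isOneDesign G k x :=
  stmt3_general p tm hodd G hexp k hk2 hkn hdvd x
end

section
/- Let G = Z_n be a cyclic group, q the largest prime factor of n with ν_q(n) = t, and assume n ≤ q^{2t} - 1. If gcd(k, n) = 1, then for any x ∈ Z_n the incidence structure (Z_n, B_k^x) is not a 1-design. -/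
open Finset

/-!
Since `k` is prime to `n`, translating a block by `c` moves its sum by `k • c` and
`c ↦ k • c` is onto, so the `n` sum classes `B_k^y` all have `C(n, k) / n` blocks.
Counting incidences of a 1-design with replication number `r` gives `n r = |B_k^x| k`,
hence `n² ∣ C(n, k) k` and, `k` being prime to `n`, `n² ∣ C(n, k)`. In particular
`q^{2t} ∣ C(n, k)`; but every prime power dividing `C(n, k)` is at most `n` (Kummer).
-/

section SumBlocks

variable {G : Type} [AddCommGroup G] [Fintype G] [DecidableEq G]

theorem map_addRight_mem_sumBlocks {k : ℕ} {x : G} {T : Finset G} (c : G)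
    (hT : T ∈ sumBlocks G k x) :
    T.map (Equiv.addRight c).toEmbedding ∈ sumBlocks G k (x + k • c) := by
  obtain ⟨hcard, hsum⟩ := (mem_filter.1 hT).2
  refine mem_filter.2 ⟨mem_univ _, (card_map _).trans hcard, ?_⟩
  rw [sum_map, ← hsum, ← hcard, ← sum_const, ← sum_add_distrib]
  rfl

theorem card_sumBlocks_add_nsmul (k : ℕ) (x c : G) :
    #(sumBlocks G k (x + k • c)) = #(sumBlocks G k x) := by
  refine card_nbij' (fun T => T.map (Equiv.addRight (-c)).toEmbedding)
    (fun T => T.map (Equiv.addRight c).toEmbedding) (fun T hT => ?_)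
    (fun T hT => map_addRight_mem_sumBlocks c hT) (fun T _ => ?_) (fun T _ => ?_)
  · simpa using map_addRight_mem_sumBlocks (-c) hT
  all_goals ext; simp

theorem card_sumBlocks_eq_of_coprime {k : ℕ} (hk : (Nat.card G).Coprime k) (x y : G) :
    #(sumBlocks G k y) = #(sumBlocks G k x) := by
  obtain ⟨c, hc⟩ := hk.nsmul_right_bijective.surjective (y - x)
  rw [show y = x + k • c by simp [hc]]
  exact card_sumBlocks_add_nsmul k x c

theorem sum_card_sumBlocks (k : ℕ) :
    ∑ y : G, #(sumBlocks G k y) = (Fintype.card G).choose k := by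
  rw [← card_univ, ← card_powersetCard, card_eq_sum_card_fiberwise (f := (·.sum id))
    (t := univ) fun _ _ => mem_univ _]
  refine sum_congr rfl fun y _ => congrArg card ?_
  ext T
  simp [sumBlocks]

theorem card_mul_card_sumBlocks_of_coprime {k : ℕ} (hk : (Nat.card G).Coprime k) (x : G) :
    Fintype.card G * #(sumBlocks G k x) = (Fintype.card G).choose k := by
  rw [← sum_card_sumBlocks, ← card_univ, ← smul_eq_mul, ← sum_const]
  exact sum_congr rfl fun y _ => (card_sumBlocks_eq_of_coprime hk x y).symm

theorem card_mul_eq_card_sumBlocks_mul {k r : ℕ} {x : G}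
    (hr : ∀ y : G, #{B ∈ sumBlocks G k x | y ∈ B} = r) :
    Fintype.card G * r = #(sumBlocks G k x) * k := by
  rw [← sum_card hr, sum_const_nat fun B hB => (mem_filter.1 hB).2.1]

theorem le_card_of_isOneDesign {k : ℕ} {x : G} (h : isOneDesign G k x) :
    k ≤ Fintype.card G := by
  obtain ⟨B, hB⟩ := nonempty_iff_ne_empty.2 h.1
  exact (mem_filter.1 hB).2.1 ▸ card_le_univ B

theorem sq_card_dvd_choose_of_isOneDesign {k : ℕ} {x : G} (hk : (Nat.card G).Coprime k)
    (h : isOneDesign G k x) : Fintype.card G ^ 2 ∣ (Fintype.card G).choose k := by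
  obtain ⟨r, hr⟩ := h.2
  have hk' : (Fintype.card G ^ 2).Coprime k := (Nat.card_eq_fintype_card (α := G) ▸ hk).pow_left 2
  refine hk'.dvd_of_dvd_mul_right ⟨r, ?_⟩
  rw [← card_mul_card_sumBlocks_of_coprime hk x, mul_assoc,
    ← card_mul_eq_card_sumBlocks_mul hr, sq, mul_assoc]

end SumBlocks

theorem Nat.pow_le_of_pow_dvd_choose {p n k m : ℕ} (hp : p.Prime) (hn : 0 < n)
    (hk : k ≤ n) (h : p ^ m ∣ n.choose k) : p ^ m ≤ n :=
  (Nat.pow_le_pow_right hp.pos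
    ((hp.pow_dvd_iff_le_factorization (Nat.choose_pos hk).ne').1 h)).trans
    (Nat.pow_factorization_choose_le hn)

theorem stmt9_general (n q t k : ℕ) [NeZero n] (hq : q.Prime)
    (ht : n.factorization q = t) (hle : n ≤ q ^ (2 * t) - 1)
    (hgcd : Nat.gcd k n = 1) (x : ZMod n) :
    ¬ isOneDesign (ZMod n) k x := by
  intro h
  have hcop : (Nat.card (ZMod n)).Coprime k := by
    rw [Nat.card_zmod]
    exact Nat.coprime_comm.1 hgcd
  have hn2 : n ^ 2 ∣ n.choose k := by
    simpa [ZMod.card] using sq_card_dvd_choose_of_isOneDesign hcop h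
  have hqt : q ^ (2 * t) ∣ n.choose k :=
    (pow_mul' q 2 t ▸ pow_dvd_pow_of_dvd (ht ▸ Nat.ordProj_dvd n q) 2).trans hn2
  have hk : k ≤ n := by simpa [ZMod.card] using le_card_of_isOneDesign h
  have hq_le : q ^ (2 * t) ≤ n := Nat.pow_le_of_pow_dvd_choose hq (Nat.pos_of_neZero n) hk hqt
  have hn : n ≠ 0 := NeZero.ne n
  omega

theorem stmt9 (n q t k : ℕ) [NeZero n] (hq : q.Prime) (hqn : q ∣ n)
    (hmax : ∀ r : ℕ, r.Prime → r ∣ n → r ≤ q)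
    (ht : n.factorization q = t) (hle : n ≤ q ^ (2 * t) - 1)
    (hgcd : Nat.gcd k n = 1) (x : ZMod n) :
    ¬ isOneDesign (ZMod n) k x :=
  stmt9_general n q t k hq ht hle hgcd x
end
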